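/- arXiv:1202.6044 — 3 statements merged into one kernel-verified Lean document; each statement's English description precedes it below -/
import Mathlib

section
/- Every finitely generated infinite group has a just-infinite quotient; that is, there exists a normal subgroup N of G such that G/N is infinite but every proper quotient of G/N is finite. -/
/-!
Among the normal subgroups of infinite index (a nonempty family, as it contains `⊥`), take a
maximal one `N`, by Zorn's lemma. The union of a chain of subgroups of infinite index has
infinite index: otherwise it is finitely generated, being of finite index in a finitely generated
group, so its finitely many generators already lie in one member of the chain. By maximality,
every nontrivial normal subgroup of `G ⧸ N` pulls back to a normal subgroup strictly above `N`,
which must have finite index.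
-/

namespace Subgroup

variable {G : Type*} [Group G]

theorem FG.exists_mem_le_of_le_sSup {H : Subgroup G} (hH : H.FG) {K : Set (Subgroup G)}
    (hne : K.Nonempty) (hK : DirectedOn (· ≤ ·) K) (hle : H ≤ sSup K) : ∃ L ∈ K, H ≤ L := by
  obtain ⟨S, rfl⟩ := hH
  have hS : (S : Set G) ⊆ ⋃ L ∈ K, (L : Set G) := fun x hx ↦ by
    simpa using (mem_sSup_of_directedOn hne hK).1 (hle (subset_closure hx))
  obtain ⟨L, hL, hSL⟩ := hK.exists_mem_subset_of_finset_subset_biUnion hne hS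
  exact ⟨L, hL, closure_le L |>.2 hSL⟩

theorem exists_mem_finiteIndex_of_finiteIndex_sSup [Group.FG G] {K : Set (Subgroup G)}
    (hne : K.Nonempty) (hK : DirectedOn (· ≤ ·) K) (hfin : (sSup K).FiniteIndex) :
    ∃ L ∈ K, L.FiniteIndex := by
  have hfg : (sSup K).FG := (Group.fg_iff_subgroup_fg _).1 inferInstance
  obtain ⟨L, hL, hle⟩ := hfg.exists_mem_le_of_le_sSup hne hK le_rfl
  exact ⟨L, hL, finiteIndex_of_le hle⟩

theorem exists_maximal_normal_not_finiteIndex [Group.FG G] [Infinite G] :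
    ∃ N : Subgroup G, Maximal (fun P ↦ P.Normal ∧ ¬ P.FiniteIndex) N := by
  have hbot : ¬ (⊥ : Subgroup G).FiniteIndex := by
    rw [not_finiteIndex_iff, index_bot, Nat.card_eq_zero_of_infinite]
  let S : Set (Subgroup G) := {P | P.Normal ∧ ¬ P.FiniteIndex}
  have hchains : ∀ c ⊆ S, IsChain (· ≤ ·) c → ∀ L ∈ c, ∃ U ∈ S, ∀ P ∈ c, P ≤ U := by
    intro c hc hchain L hL
    refine ⟨sSup c, ⟨sSup_normal c fun P hP ↦ (hc hP).1, fun hfin ↦ ?_⟩, fun _ ↦ le_sSup⟩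
    obtain ⟨P, hP, hPfin⟩ :=
      exists_mem_finiteIndex_of_finiteIndex_sSup ⟨L, hL⟩ hchain.directedOn hfin
    exact (hc hP).2 hPfin
  obtain ⟨N, -, hN⟩ := zorn_le_nonempty₀ S hchains ⊥ ⟨inferInstance, hbot⟩
  exact ⟨N, hN⟩

end Subgroup

theorem QuotientGroup.finiteIndex_of_ne_bot {G : Type*} [Group G] {N : Subgroup G} [N.Normal]
    (hN : ∀ P : Subgroup G, P.Normal → N < P → P.FiniteIndex) {M : Subgroup (G ⧸ N)} [M.Normal]
    (hM : M ≠ ⊥) : M.FiniteIndex := by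
  have hsurj : Function.Surjective (mk' N) := mk'_surjective N
  have hNP : N < M.comap (mk' N) := by
    refine lt_of_le_of_ne ((ker_mk' N).ge.trans (MonoidHom.ker_le_comap _ M)) fun hP ↦ hM ?_
    rw [← Subgroup.map_comap_eq_self_of_surjective hsurj M, ← hP, map_mk'_self]
  have := hN _ inferInstance hNP
  constructor
  rw [← Subgroup.index_comap_of_surjective M hsurj]
  exact Subgroup.FiniteIndex.index_ne_zero

theorem exists_just_infinite_quotient (G : Type*) [Group G] [Group.FG G] [Infinite G] :
    ∃ N : Subgroup G, ∃ _ : N.Normal, Infinite (G ⧸ N) ∧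
      ∀ M : Subgroup (G ⧸ N), M.Normal → M ≠ ⊥ → M.FiniteIndex := by
  obtain ⟨N, hmax⟩ := Subgroup.exists_maximal_normal_not_finiteIndex (G := G)
  obtain ⟨hNormal, hInf⟩ := hmax.prop
  refine ⟨N, hNormal, ?_, fun M _ hM ↦ QuotientGroup.finiteIndex_of_ne_bot ?_ hM⟩
  · rwa [Subgroup.finiteIndex_iff_finite_quotient, not_finite_iff_infinite] at hInf
  · intro P hP hNP
    by_contra hPinf
    exact hmax.not_prop_of_gt hNP ⟨hP, hPinf⟩
end

section
/- If a group G has a central subgroup of finite index, then the commutator subgroup of G is finite. -/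
/-!
A commutator `⁅a, b⁆` only depends on the cosets of `a` and `b` modulo the centre, so a group
whose centre has finite index `n` has at most `n ^ 2` commutators. Schur's theorem, in Mathlib as
the instance `Finite (commutatorSet G) → Finite (commutator G)`, finishes the proof.
-/

section

open Subgroup
open scoped commutatorElement

variable {G : Type*} [Group G]

theorem commutatorElement_mul_mem_center_left (a b : G) {z : G} (hz : z ∈ center G) :
    ⁅a * z, b⁆ = ⁅a, b⁆ := by
  have hzb : ⁅z, b⁆ = 1 := commutatorElement_eq_one_iff_commute.mpr (mem_center_iff.mp hz b).symm
  rw [commutatorElement_mul_left_eq_conj_mul, hzb, mul_one, mul_inv_cancel, one_mul]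

theorem commutatorElement_mul_mem_center_right (a b : G) {z : G} (hz : z ∈ center G) :
    ⁅a, b * z⁆ = ⁅a, b⁆ := by
  have haz : ⁅a, z⁆ = 1 := commutatorElement_eq_one_iff_commute.mpr (mem_center_iff.mp hz a)
  rw [commutatorElement_mul_right_eq_mul_conj, haz, mul_one, mul_inv_cancel_right]

theorem commutatorElement_out_mk_center (a b : G) :
    ⁅(a : G ⧸ center G).out, (b : G ⧸ center G).out⁆ = ⁅a, b⁆ := by
  obtain ⟨⟨z, hz⟩, ha⟩ := QuotientGroup.mk_out_eq_mul (center G) a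
  obtain ⟨⟨w, hw⟩, hb⟩ := QuotientGroup.mk_out_eq_mul (center G) b
  rw [ha, hb, commutatorElement_mul_mem_center_left _ _ hz,
    commutatorElement_mul_mem_center_right _ _ hw]

theorem finite_commutatorSet_of_finiteIndex_center [(center G).FiniteIndex] :
    Finite (commutatorSet G) := by
  have : Finite (G ⧸ center G) := finite_quotient_of_finiteIndex
  refine Set.Finite.subset
    (Set.finite_range fun p : (G ⧸ center G) × (G ⧸ center G) => ⁅p.1.out, p.2.out⁆) ?_
  rintro _ ⟨a, b, rfl⟩
  exact ⟨(a, b), commutatorElement_out_mk_center a b⟩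

end

theorem commutator_finite_of_central_finite_index {G : Type*} [Group G]
    (H : Subgroup G) (hcentral : H ≤ Subgroup.center G) (hindex : H.FiniteIndex) :
    Finite (commutator G) := by
  have : (Subgroup.center G).FiniteIndex := Subgroup.finiteIndex_of_le hcentral
  have := finite_commutatorSet_of_finiteIndex_center (G := G)
  infer_instance
end

section
/- Let G be a finitely generated group and N ⊴ G a normal subgroup such that G/N is infinite cyclic. If G has polynomial growth of degree at most d, then N is finitely generated and has polynomial growth of degree at most d − 1. -/
/-- Word length of `g` with respect to a generating set `S`:
the least `n` such that `g` is a product of `n` elements of `S ∪ S⁻¹`. -/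
noncomputable def wordLength {G : Type*} [Group G] (S : Set G) (g : G) : ℕ :=
  sInf {n | ∃ l : List G, (∀ x ∈ l, x ∈ S ∨ x⁻¹ ∈ S) ∧ l.length = n ∧ l.prod = g}

/-- Growth function: number of elements of word length at most `n`. -/
noncomputable def growth {G : Type*} [Group G] (S : Set G) (n : ℕ) : ℕ :=
  Nat.card {g : G | wordLength S g ≤ n}

/-!
Choose `t ∈ G` mapping to a generator of `G ⧸ N ≅ ℤ`. Multiplying each generator of `G` by a
power of `t` gives a finite `U ⊆ N` with `G = ⟨t, U⟩`, so every `g ∈ G` is `c * t ^ e` with `c` in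
one of the increasing subgroups `H m` generated by the conjugates `t ^ j * U * t ^ (-j)`, `|j| ≤ m`,
and `N` is their union. As soon as `H (m + 1) = H m` the chain is constant, so `N = H m` is finitely
generated. If it never stabilises, pick `g m ∈ H (m + 1) \ H m`: the `2 ^ r` ordered subproducts of
`g 0, …, g (r - 1)` are pairwise distinct and have word length `O(r ^ 2)`, contradicting polynomial
growth.

For the growth of `N`, the elements `t ^ k * x` with `k ≤ n` and `x` in the `n`-ball of `N` are
pairwise distinct and lie in a ball of radius `O(n)` of `G`, so `(n + 1) γ_N(n) = O(n ^ d)`.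
-/

open Subgroup Function

section WordLength

variable {G : Type*} [Group G] {S : Set G}

lemma wordLength_le_length {g : G} {l : List G} (hl : ∀ x ∈ l, x ∈ S ∨ x⁻¹ ∈ S)
    (hg : l.prod = g) : wordLength S g ≤ l.length :=
  Nat.sInf_le ⟨l, hl, rfl, hg⟩

lemma exists_list_length_eq_wordLength (hS : closure S = ⊤) (g : G) :
    ∃ l : List G, (∀ x ∈ l, x ∈ S ∨ x⁻¹ ∈ S) ∧ l.length = wordLength S g ∧ l.prod = g := by
  have hg : g ∈ Submonoid.closure (S ∪ S⁻¹) := by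
    rw [← closure_toSubmonoid, hS]
    exact mem_top g
  obtain ⟨l, hl, hprod⟩ := Submonoid.exists_list_of_mem_closure hg
  show wordLength S g ∈ {n | ∃ l : List G, (∀ x ∈ l, x ∈ S ∨ x⁻¹ ∈ S) ∧ l.length = n ∧ l.prod = g}
  exact Nat.sInf_mem ⟨l.length, l, hl, rfl, hprod⟩

@[simp]
lemma wordLength_one : wordLength S (1 : G) = 0 :=
  Nat.le_zero.mp (wordLength_le_length (l := []) (by simp) rfl)

lemma wordLength_mul_le (hS : closure S = ⊤) (g h : G) :
    wordLength S (g * h) ≤ wordLength S g + wordLength S h := by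
  obtain ⟨l, hl, hlen, rfl⟩ := exists_list_length_eq_wordLength hS g
  obtain ⟨l', hl', hlen', rfl⟩ := exists_list_length_eq_wordLength hS h
  rw [← hlen, ← hlen', ← List.length_append]
  exact wordLength_le_length (fun x hx => (List.mem_append.mp hx).elim (hl x) (hl' x))
    (List.prod_append ..)

lemma wordLength_inv (hS : closure S = ⊤) (g : G) : wordLength S g⁻¹ = wordLength S g := by
  suffices h : ∀ g : G, wordLength S g⁻¹ ≤ wordLength S g from
    le_antisymm (h g) (by simpa using h g⁻¹)
  intro g
  obtain ⟨l, hl, hlen, rfl⟩ := exists_list_length_eq_wordLength hS g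
  refine (wordLength_le_length (l := (l.map (·⁻¹)).reverse) ?_
    (List.prod_inv_reverse l).symm).trans_eq (by simp [hlen])
  intro x hx
  simpa [or_comm] using hl x⁻¹ (by simpa using hx)

lemma wordLength_pow_le (hS : closure S = ⊤) (g : G) (k : ℕ) :
    wordLength S (g ^ k) ≤ k * wordLength S g := by
  induction k with
  | zero => simp
  | succ k ih =>
    rw [pow_succ, Nat.succ_mul]
    exact (wordLength_mul_le hS _ _).trans (by omega)

lemma wordLength_zpow_le (hS : closure S = ⊤) (g : G) (k : ℤ) :
    wordLength S (g ^ k) ≤ k.natAbs * wordLength S g := by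
  obtain ⟨n, rfl | rfl⟩ := Int.eq_nat_or_neg k
  · simpa using wordLength_pow_le hS g n
  · simpa [wordLength_inv hS] using wordLength_pow_le hS g n

lemma wordLength_conj_zpow_le (hS : closure S = ⊤) (t x : G) (j : ℤ) :
    wordLength S (t ^ j * x * t ^ (-j)) ≤ 2 * j.natAbs * wordLength S t + wordLength S x := by
  have h₁ := wordLength_mul_le hS (t ^ j * x) (t ^ (-j))
  have h₂ := wordLength_mul_le hS (t ^ j) x
  have h₃ := wordLength_zpow_le hS t j
  have h₄ := wordLength_zpow_le hS t (-j)
  rw [Int.natAbs_neg] at h₄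
  linarith

lemma wordLength_list_prod_le (hS : closure S = ⊤) {l : List G} {c : ℕ}
    (h : ∀ x ∈ l, wordLength S x ≤ c) : wordLength S l.prod ≤ l.length * c := by
  induction l with
  | nil => simp
  | cons y l ih =>
    rw [List.prod_cons, List.length_cons, Nat.succ_mul]
    have := ih fun x hx => h x (List.mem_cons_of_mem _ hx)
    have := h y List.mem_cons_self
    have := wordLength_mul_le hS y l.prod
    omega

lemma wordLength_map_le {H : Type*} [Group H] {B : Set H} (hB : closure B = ⊤)
    (hS : closure S = ⊤) (f : H →* G) {L : ℕ} (hL : ∀ b ∈ B, wordLength S (f b) ≤ L) (x : H) :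
    wordLength S (f x) ≤ wordLength B x * L := by
  obtain ⟨l, hl, hlen, rfl⟩ := exists_list_length_eq_wordLength hB x
  rw [map_list_prod, ← hlen]
  refine (wordLength_list_prod_le hS (l := l.map f) (c := L) fun y hy => ?_).trans_eq (by simp)
  obtain ⟨z, hz, rfl⟩ := List.mem_map.mp hy
  rcases hl z hz with hz | hz
  · exact hL z hz
  · simpa [wordLength_inv hS] using hL _ hz

lemma finite_setOf_wordLength_le (hS : closure S = ⊤) (hfin : S.Finite) (n : ℕ) :
    {g : G | wordLength S g ≤ n}.Finite := by
  have : Finite ↥(S ∪ S⁻¹) := (hfin.union hfin.inv).to_subtype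
  refine ((List.finite_length_le _ n).image
    fun l : List ↥(S ∪ S⁻¹) => (l.map (↑)).prod).subset fun g (hg : wordLength S g ≤ n) => ?_
  obtain ⟨l, hl, hlen, rfl⟩ := exists_list_length_eq_wordLength hS g
  lift l to List ↥(S ∪ S⁻¹) using hl
  rw [← hlen, List.length_map] at hg
  exact ⟨l, hg, rfl⟩

lemma card_le_growth (hS : closure S = ⊤) (hfin : S.Finite) {α : Type*} {f : α → G}
    (hf : Injective f) {n : ℕ} (hn : ∀ a, wordLength S (f a) ≤ n) : Nat.card α ≤ growth S n := by
  rw [← Nat.card_range_of_injective hf]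
  exact Nat.card_mono (finite_setOf_wordLength_le hS hfin n) (Set.range_subset_iff.mpr hn)

end WordLength

section StrictChain

variable {G : Type*} [Group G]

def subproduct (g : ℕ → G) {r : ℕ} (ε : Fin r → Bool) : G :=
  (List.ofFn fun i => if ε i then g i else 1).prod

lemma subproduct_succ (g : ℕ → G) {r : ℕ} (ε : Fin (r + 1) → Bool) :
    subproduct g ε = subproduct g (ε ∘ Fin.castSucc) * if ε (Fin.last r) then g r else 1 := by
  simp only [subproduct, List.ofFn_succ', List.prod_concat, Function.comp_apply, Fin.val_castSucc,
    Fin.val_last]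

variable {H : ℕ → Subgroup G} {g : ℕ → G}

lemma subproduct_mem (hH : Monotone H) (hg : ∀ i, g i ∈ H (i + 1)) {r : ℕ} (ε : Fin r → Bool) :
    subproduct g ε ∈ H r := by
  refine list_prod_mem fun x hx => ?_
  obtain ⟨i, rfl⟩ := List.mem_ofFn.mp hx
  split
  · exact hH i.2 (hg i)
  · exact one_mem _

lemma subproduct_injective (hH : Monotone H) (hg : ∀ i, g i ∈ H (i + 1)) (hg' : ∀ i, g i ∉ H i)
    (r : ℕ) : Injective (subproduct g (r := r)) := by
  induction r with
  | zero => exact fun _ _ _ => Subsingleton.elim _ _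
  | succ r ih =>
    intro ε δ h
    rw [subproduct_succ, subproduct_succ] at h
    set p := subproduct g (ε ∘ Fin.castSucc)
    set q := subproduct g (δ ∘ Fin.castSucc)
    have hlast : ε (Fin.last r) = δ (Fin.last r) := by
      have hmem : (if ε (Fin.last r) then g r else 1) * (if δ (Fin.last r) then g r else 1)⁻¹
          ∈ H r := by
        rw [show _ * _⁻¹ = p⁻¹ * q by
          rw [eq_inv_mul_iff_mul_eq, ← mul_assoc, h, mul_inv_cancel_right]]
        exact mul_mem (inv_mem (subproduct_mem hH hg _)) (subproduct_mem hH hg _)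
      revert hmem
      cases ε (Fin.last r) <;> cases δ (Fin.last r) <;> simp [hg' r]
    rw [hlast] at h
    have hinit := ih (mul_right_cancel h)
    funext i
    induction i using Fin.lastCases with
    | last => exact hlast
    | cast i => exact congrFun hinit i

end StrictChain

lemma exists_mul_pow_lt_two_pow (a k : ℕ) : ∃ r, 1 ≤ r ∧ a * r ^ k < 2 ^ r := by
  have hlim := (tendsto_pow_const_div_const_pow_of_one_lt k one_lt_two).eventually
    (gt_mem_nhds (show (0 : ℝ) < 1 / (a + 1) by positivity))
  obtain ⟨r, hr, hr1⟩ := (hlim.and (Filter.eventually_ge_atTop 1)).exists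
  refine ⟨r, hr1, ?_⟩
  rw [div_lt_div_iff₀ (by positivity) (by positivity)] at hr
  have hr0 : (0 : ℝ) ≤ r ^ k := by positivity
  exact_mod_cast (by nlinarith : (a : ℝ) * r ^ k < 2 ^ r)

theorem not_growth_le_of_strict_chain {G : Type*} [Group G] {S : Set G} (hS : closure S = ⊤)
    (hfin : S.Finite) {H : ℕ → Subgroup G} (hH : Monotone H) {g : ℕ → G}
    (hg : ∀ i, g i ∈ H (i + 1)) (hg' : ∀ i, g i ∉ H i) {c : ℕ} (hc : 1 ≤ c)
    (hlen : ∀ i, wordLength S (g i) ≤ c * (i + 1)) (C d : ℕ) :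
    ¬ ∀ n, 1 ≤ n → growth S n ≤ C * n ^ d := by
  intro hgrow
  obtain ⟨r, hr, hlt⟩ := exists_mul_pow_lt_two_pow (C * c ^ d) (2 * d)
  have hprod (ε : Fin r → Bool) : wordLength S (subproduct g ε) ≤ c * r ^ 2 := by
    refine (wordLength_list_prod_le hS (c := c * r) fun x hx => ?_).trans_eq
      (by simp [sq, mul_left_comm])
    obtain ⟨i, rfl⟩ := List.mem_ofFn.mp hx
    split
    · exact (hlen i).trans (Nat.mul_le_mul_left c i.2)
    · simp
  have hcard := card_le_growth hS hfin (subproduct_injective hH hg hg' r) hprod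
  have hpos : 1 ≤ c * r ^ 2 := Nat.one_le_iff_ne_zero.mpr (by positivity)
  have : 2 ^ r < 2 ^ r := calc
    2 ^ r = Nat.card (Fin r → Bool) := by simp
    _ ≤ growth S (c * r ^ 2) := hcard
    _ ≤ C * (c * r ^ 2) ^ d := hgrow _ hpos
    _ = C * c ^ d * r ^ (2 * d) := by ring
    _ < 2 ^ r := hlt
  exact lt_irrefl _ this

section Conjugates

variable {G : Type*} [Group G]

def conjugatesUpTo (t : G) (U : Set G) (m : ℕ) : Set G :=
  {g | ∃ j : ℤ, j.natAbs ≤ m ∧ ∃ x ∈ U, g = t ^ j * x * t ^ (-j)}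

variable {t : G} {U : Set G}

lemma conjugatesUpTo_mono : Monotone (conjugatesUpTo t U) := by
  rintro m k hmk _ ⟨j, hj, x, hx, rfl⟩
  exact ⟨j, hj.trans hmk, x, hx, rfl⟩

lemma Set.Finite.conjugatesUpTo (hU : U.Finite) (m : ℕ) : (conjugatesUpTo t U m).Finite := by
  refine (((Set.finite_Icc (-m : ℤ) m).prod hU).image
    fun p => t ^ p.1 * p.2 * t ^ (-p.1)).subset ?_
  rintro _ ⟨j, hj, x, hx, rfl⟩
  exact ⟨(j, x), ⟨Set.mem_Icc.mpr ⟨by omega, by omega⟩, hx⟩, rfl⟩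

lemma closure_conjugatesUpTo_le {K : Subgroup G} [K.Normal] (hU : U ⊆ K) (m : ℕ) :
    closure (conjugatesUpTo t U m) ≤ K := by
  rw [closure_le]
  rintro _ ⟨j, -, x, hx, rfl⟩
  simpa [zpow_neg] using ‹K.Normal›.conj_mem x (hU hx) (t ^ j)

lemma conj_zpow_mem_closure_conjugatesUpTo {m : ℕ} {c : G}
    (hc : c ∈ closure (conjugatesUpTo t U m)) (j : ℤ) :
    t ^ j * c * t ^ (-j) ∈ closure (conjugatesUpTo t U (m + j.natAbs)) := by
  have h := mem_map_of_mem (MulAut.conj (t ^ j)).toMonoidHom hc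
  rw [MonoidHom.map_closure] at h
  refine closure_mono ?_
    (by simpa only [MulEquiv.coe_toMonoidHom, MulAut.conj_apply, zpow_neg] using h)
  rintro _ ⟨_, ⟨i, hi, x, hx, rfl⟩, rfl⟩
  exact ⟨j + i, by omega, x, hx, by simp only [MulAut.conj_apply]; group⟩

lemma exists_mem_closure_conjugatesUpTo_mul_zpow (hgen : closure (insert t U) = ⊤) (g : G) :
    ∃ m, ∃ c ∈ closure (conjugatesUpTo t U m), ∃ e : ℤ, g = c * t ^ e := by
  have hg : g ∈ closure (insert t U) := hgen ▸ mem_top g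
  induction hg using closure_induction with
  | mem x hx =>
    rcases hx with rfl | hx
    · exact ⟨0, 1, one_mem _, 1, by simp⟩
    · exact ⟨0, x, Subgroup.subset_closure ⟨0, le_rfl, x, hx, by simp⟩, 0, by simp⟩
  | one => exact ⟨0, 1, one_mem _, 0, by simp⟩
  | mul x y _ _ hx hy =>
    obtain ⟨m, c, hc, e, rfl⟩ := hx
    obtain ⟨m', c', hc', e', rfl⟩ := hy
    refine ⟨max m (m' + e.natAbs), c * (t ^ e * c' * t ^ (-e)), mul_mem ?_ ?_, e + e', by group⟩
    · exact closure_mono (conjugatesUpTo_mono (le_max_left _ _)) hc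
    · exact closure_mono (conjugatesUpTo_mono (le_max_right _ _))
        (conj_zpow_mem_closure_conjugatesUpTo hc' e)
  | inv x _ hx =>
    obtain ⟨m, c, hc, e, rfl⟩ := hx
    exact ⟨_, _, conj_zpow_mem_closure_conjugatesUpTo (inv_mem hc) (-e), -e, by group⟩

lemma closure_conjugatesUpTo_le_of_succ_le {m : ℕ}
    (hm : closure (conjugatesUpTo t U (m + 1)) ≤ closure (conjugatesUpTo t U m)) (k : ℕ) :
    closure (conjugatesUpTo t U k) ≤ closure (conjugatesUpTo t U m) := by
  induction k with
  | zero => exact closure_mono (conjugatesUpTo_mono (Nat.zero_le m))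
  | succ k ih =>
    rw [closure_le]
    rintro _ ⟨j, hj, x, hx, rfl⟩
    obtain ⟨s, hs, hi⟩ : ∃ s : ℤ, s.natAbs ≤ 1 ∧ (j - s).natAbs ≤ k :=
      ⟨max (-1) (min j 1), by omega, by omega⟩
    -- peel off one conjugation by `t ^ s` (`s` the sign of `j`): the rest lies at level `k`, hence
    -- at level `m`, and `hm` absorbs the extra conjugation
    have hx' := ih (Subgroup.subset_closure ⟨j - s, hi, x, hx, rfl⟩)
    have h := conj_zpow_mem_closure_conjugatesUpTo hx' s
    refine hm (closure_mono (conjugatesUpTo_mono (show m + s.natAbs ≤ m + 1 by omega)) ?_)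
    convert h using 1
    rw [show j = s + (j - s) by ring, neg_add, zpow_add, zpow_add]
    group

end Conjugates

section InfiniteCyclicQuotient

variable {G : Type*} [Group G] {S : Set G}

lemma exists_closure_conjugatesUpTo_succ_le (hS : closure S = ⊤) (hfin : S.Finite) {C d : ℕ}
    (hgrow : ∀ n, 1 ≤ n → growth S n ≤ C * n ^ d) (t : G) {U : Set G} (hU : U.Finite) :
    ∃ m, closure (conjugatesUpTo t U (m + 1)) ≤ closure (conjugatesUpTo t U m) := by
  obtain ⟨R, hR⟩ := (hU.image (wordLength S)).bddAbove
  by_contra! h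
  simp only [closure_le, Set.not_subset] at h
  choose g hg hg' using h
  refine not_growth_le_of_strict_chain hS hfin
    (fun _ _ hmn => closure_mono (conjugatesUpTo_mono hmn)) (fun i => Subgroup.subset_closure (hg i))
    hg' (c := 2 * wordLength S t + R + 1) (by omega) (fun i => ?_) C d hgrow
  obtain ⟨j, hj, x, hx, hgi⟩ := hg i
  have hconj := wordLength_conj_zpow_le hS t x j
  have hxR := hR (Set.mem_image_of_mem _ hx)
  rw [hgi]
  nlinarith

lemma exists_finite_subset_ker_closure_insert_eq_top (hS : closure S = ⊤) (hfin : S.Finite)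
    (π : G →* Multiplicative ℤ) {t : G} (ht : π t = Multiplicative.ofAdd 1) :
    ∃ U : Set G, U.Finite ∧ U ⊆ π.ker ∧ closure (insert t U) = ⊤ := by
  let u (a : G) : G := a * t ^ (-(π a).toAdd)
  refine ⟨u '' S, hfin.image u, ?_, ?_⟩
  · rintro _ ⟨a, -, rfl⟩
    simp [u, ht, ← ofAdd_zsmul]
  · rw [eq_top_iff, ← hS, closure_le]
    intro a ha
    rw [SetLike.mem_coe, show a = u a * t ^ (π a).toAdd by simp [u]]
    exact mul_mem (Subgroup.subset_closure (Set.mem_insert_of_mem t ⟨a, ha, rfl⟩))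
      (zpow_mem (Subgroup.subset_closure (Set.mem_insert t _)) _)

theorem fg_ker_of_growth_le (hS : closure S = ⊤) (hfin : S.Finite) {C d : ℕ}
    (hgrow : ∀ n, 1 ≤ n → growth S n ≤ C * n ^ d) (π : G →* Multiplicative ℤ) {t : G}
    (ht : π t = Multiplicative.ofAdd 1) : Group.FG π.ker := by
  obtain ⟨U, hUfin, hUker, hgen⟩ := exists_finite_subset_ker_closure_insert_eq_top hS hfin π ht
  obtain ⟨m, hm⟩ := exists_closure_conjugatesUpTo_succ_le hS hfin hgrow t hUfin
  have hker : closure (conjugatesUpTo t U m) = π.ker := by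
    refine le_antisymm (closure_conjugatesUpTo_le hUker m) fun g hg => ?_
    obtain ⟨k, c, hc, e, rfl⟩ := exists_mem_closure_conjugatesUpTo_mul_zpow hgen g
    have hck : π c = 1 := closure_conjugatesUpTo_le hUker k hc
    have he : e = 0 := by simpa [hck, ht, ← ofAdd_zsmul] using hg
    simpa [he] using closure_conjugatesUpTo_le_of_succ_le hm k hc
  have := (hUfin.conjugatesUpTo (t := t) m).to_subtype
  exact hker ▸ Group.closure_finite_fg _

lemma succ_mul_growth_ker_le (hS : closure S = ⊤) (hfin : S.Finite) (π : G →* Multiplicative ℤ)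
    {t : G} (ht : π t = Multiplicative.ofAdd 1) {B : Set π.ker} (hB : closure B = ⊤) {L : ℕ}
    (hL : ∀ b ∈ B, wordLength S (b : G) ≤ L) (n : ℕ) :
    (n + 1) * growth B n ≤ growth S (n * (wordLength S t + L)) := by
  let f (p : Fin (n + 1) × {x : π.ker | wordLength B x ≤ n}) : G := t ^ (p.1 : ℕ) * p.2
  have hf : Injective f := by
    rintro ⟨k, ⟨x, hx⟩, _⟩ ⟨k', ⟨x', hx'⟩, _⟩ h
    have hk : k = k' := by
      have := congrArg π h
      simp [f, ht, ← ofAdd_nsmul, MonoidHom.mem_ker.mp hx, MonoidHom.mem_ker.mp hx'] at this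
      exact Fin.ext this
    subst hk
    exact Prod.ext rfl (Subtype.ext (Subtype.ext (mul_left_cancel h)))
  have hlen (p) : wordLength S (f p) ≤ n * (wordLength S t + L) := by
    obtain ⟨⟨k, hk⟩, x, hx⟩ := p
    have h₁ := wordLength_mul_le hS (t ^ k) (x : G)
    have h₂ := wordLength_pow_le hS t k
    have h₃ := wordLength_map_le hB hS π.ker.subtype hL x
    have h₄ := Nat.mul_le_mul_right (wordLength S t) (Nat.lt_succ_iff.mp hk)
    have h₅ := Nat.mul_le_mul_right L (show wordLength B x ≤ n from hx)
    simp only [coe_subtype] at h₃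
    simp only [f]
    nlinarith
  have := card_le_growth hS hfin hf hlen
  rwa [Nat.card_prod, Nat.card_fin] at this

lemma le_mul_pow_pred_of_succ_mul_le {a K n d : ℕ} (hn : 1 ≤ n) (h : (n + 1) * a ≤ K * n ^ d) :
    a ≤ K * n ^ (d - 1) := by
  cases d with
  | zero => simpa using (Nat.le_mul_of_pos_left a (Nat.succ_pos n)).trans h
  | succ d =>
    refine Nat.le_of_mul_le_mul_left ?_ hn
    calc n * a ≤ (n + 1) * a := Nat.mul_le_mul_right a n.le_succ
      _ ≤ K * n ^ (d + 1) := h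
      _ = n * (K * n ^ d) := by ring

theorem growth_ker_le (hS : closure S = ⊤) (hfin : S.Finite) {C d : ℕ} (hC : 0 < C)
    (hgrow : ∀ n, 1 ≤ n → growth S n ≤ C * n ^ d) (π : G →* Multiplicative ℤ) {t : G}
    (ht : π t = Multiplicative.ofAdd 1) {B : Set π.ker} (hB : closure B = ⊤) (hBfin : B.Finite) :
    ∃ C' : ℕ, 0 < C' ∧ ∀ n, 1 ≤ n → growth B n ≤ C' * n ^ (d - 1) := by
  obtain ⟨L, hL⟩ := (hBfin.image fun b : π.ker => wordLength S (b : G)).bddAbove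
  set M := wordLength S t + (L + 1)
  refine ⟨C * M ^ d, by positivity, fun n hn => le_mul_pow_pred_of_succ_mul_le hn ?_⟩
  calc (n + 1) * growth B n ≤ growth S (n * M) :=
        succ_mul_growth_ker_le hS hfin π ht hB (fun b hb => (hL ⟨b, hb, rfl⟩).trans L.le_succ) n
    _ ≤ C * (n * M) ^ d := hgrow _ (Nat.one_le_iff_ne_zero.mpr (by positivity))
    _ = C * M ^ d * n ^ d := by rw [mul_pow, mul_comm (n ^ d), mul_assoc]

lemma exists_ker_eq_map_eq_ofAdd_one {N : Subgroup G} [N.Normal] (e : G ⧸ N ≃* Multiplicative ℤ) :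
    ∃ π : G →* Multiplicative ℤ, π.ker = N ∧ ∃ t, π t = Multiplicative.ofAdd 1 := by
  refine ⟨(e : G ⧸ N →* Multiplicative ℤ).comp (QuotientGroup.mk' N), ?_, ?_⟩
  · rw [MonoidHom.ker_mulEquiv_comp, QuotientGroup.ker_mk']
  · obtain ⟨q, hq⟩ := e.surjective (Multiplicative.ofAdd 1)
    obtain ⟨t, rfl⟩ := QuotientGroup.mk'_surjective N q
    exact ⟨t, hq⟩

end InfiniteCyclicQuotient

/-- Gromov's Splitting Lemma. -/
theorem splitting_lemma {G : Type*} [Group G]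
    (A : Finset G) (hA : Subgroup.closure (A : Set G) = ⊤)
    (N : Subgroup G) [N.Normal]
    (hcyc : Nonempty ((G ⧸ N) ≃* Multiplicative ℤ))
    (d : ℕ)
    (hpoly : ∃ C : ℕ, 0 < C ∧ ∀ n : ℕ, 1 ≤ n → growth (A : Set G) n ≤ C * n ^ d) :
    Group.FG N ∧
    ∀ B : Finset N, Subgroup.closure (B : Set N) = ⊤ →
      ∃ C : ℕ, 0 < C ∧ ∀ n : ℕ, 1 ≤ n →
        growth (B : Set N) n ≤ C * n ^ (d - 1) := by
  obtain ⟨C, hC, hgrow⟩ := hpoly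
  obtain ⟨e⟩ := hcyc
  obtain ⟨π, rfl, t, ht⟩ := exists_ker_eq_map_eq_ofAdd_one e
  exact ⟨fg_ker_of_growth_le hA A.finite_toSet hgrow π ht,
    fun B hB => growth_ker_le hA A.finite_toSet hC hgrow π ht hB B.finite_toSet⟩
end
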